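/- arXiv:1902.10898 — 2 statements merged into one kernel-verified Lean document; each statement's English description precedes it below -/
import Mathlib

section
/- For all integers m ≥ 2 and x ≥ 1, twice the number of codewords of C(m,x) whose two leftmost bits c_{m−1} c_{m−2} equal 00 is N(m−1,x); equivalently, the cardinality of Group 1 (codewords starting with 00 from the left) is (1/2) N(m−1,x). -/
/-- `noForbidden m x c` says the binary word `c = (c_{m-1}, …, c_0)` contains no contiguous
subword of the form `0 1^y 0` or `1 0^y 1` for any `1 ≤ y ≤ x`. -/
def noForbidden (m x : ℕ) (c : Fin m → Bool) : Prop :=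
  ∀ j y : ℕ, 1 ≤ y → y ≤ x → (h : j + y + 1 < m) →
    ¬ ((∀ k, 1 ≤ k → (hk : k ≤ y) → c ⟨j + k, by omega⟩ = ! c ⟨j, by omega⟩) ∧
        c ⟨j + y + 1, h⟩ = c ⟨j, by omega⟩)

/-- `N(m, x)`: the cardinality of the LOCO code `C(m, x)`. -/
noncomputable def locoN (m x : ℕ) : ℕ := Nat.card {c : Fin m → Bool // noForbidden m x c}

/-- `N(k, x)` extended to integer `k` by the convention `N(k, x) = 2` for `k ≤ 1`. -/
noncomputable def Nex (k : ℤ) (x : ℕ) : ℤ := if k ≤ 1 then 2 else (locoN k.toNat x : ℤ)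

/-- Strict lexicographic order on binary words, comparing bits from `c_{m-1}`
(most significant) down to `c_0`, with `0 < 1`. -/
def lexLt (m : ℕ) (d c : Fin m → Bool) : Prop :=
  ∃ i : Fin m, d i = false ∧ c i = true ∧ ∀ j : Fin m, (i : ℕ) < (j : ℕ) → d j = c j

/-- The index `g(m, x, c)` of a codeword: the number of codewords of `C(m, x)` that
precede `c` in lexicographic order. -/
noncomputable def locoIdx (m x : ℕ) (c : Fin m → Bool) : ℕ :=
  Nat.card {d : Fin m → Bool // noForbidden m x d ∧ lexLt m d c}

/-! Deleting the leading `0` of a Group 1 codeword gives a codeword of length `m - 1` starting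
with `0`, and every such codeword extends back, since a forbidden pattern through the new top
bit `0` would need the bit below it to be `1`. Complementing all bits preserves the code and
swaps the codewords starting with `0` and with `1`, so exactly half of `C(m - 1, x)` arises. -/

lemma noForbidden.not {m x : ℕ} {c : Fin m → Bool} (hc : noForbidden m x c) :
    noForbidden m x (fun i => !c i) := by
  intro j y hy1 hyx hlt ⟨hflip, hend⟩
  refine hc j y hy1 hyx hlt ⟨fun k hk1 hky => ?_, Bool.not_inj hend⟩
  simpa using hflip k hk1 hky

lemma noForbidden.init {n x : ℕ} {c : Fin (n + 1) → Bool} (hc : noForbidden (n + 1) x c) :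
    noForbidden n x (Fin.init c) :=
  fun j y hy1 hyx hlt => hc j y hy1 hyx (by omega)

lemma Fin.snoc_mk_of_lt {α : Type*} {n : ℕ} (p : Fin n → α) (a : α) {i : ℕ} (h : i < n) :
    (Fin.snoc p a : Fin (n + 1) → α) ⟨i, by omega⟩ = p ⟨i, h⟩ :=
  Fin.snoc_castSucc (α := fun _ => α) a p ⟨i, h⟩

lemma noForbidden.snoc_false {n x : ℕ} {d : Fin (n + 1) → Bool}
    (hd : noForbidden (n + 1) x d) (htop : d (Fin.last n) = false) :
    noForbidden (n + 2) x (Fin.snoc d false) := by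
  intro j y hy1 hyx hlt ⟨hflip, hend⟩
  by_cases hin : j + y + 1 < n + 1
  · refine hd j y hy1 hyx hin ⟨fun k hk1 hky => ?_, ?_⟩
    · simpa only [Fin.snoc_mk_of_lt _ _ (show j + k < n + 1 by omega),
        Fin.snoc_mk_of_lt _ _ (show j < n + 1 by omega)] using hflip k hk1 hky
    · simpa only [Fin.snoc_mk_of_lt _ _ hin,
        Fin.snoc_mk_of_lt _ _ (show j < n + 1 by omega)] using hend
  · obtain rfl : n = j + y := by omega
    have hj : (Fin.snoc d false : Fin (j + y + 2) → Bool) ⟨j, by omega⟩ = false :=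
      hend.symm.trans (Fin.snoc_last (α := fun _ => Bool) false d)
    have := hflip y hy1 le_rfl
    rw [hj, Fin.snoc_mk_of_lt _ _ (show j + y < j + y + 1 by omega)] at this
    exact absurd htop (by simpa [Fin.last] using this)

lemma card_noForbidden_apply_true_eq {m x : ℕ} (i : Fin m) :
    Nat.card {d : Fin m → Bool // noForbidden m x d ∧ d i = true}
      = Nat.card {d : Fin m → Bool // noForbidden m x d ∧ d i = false} :=
  Nat.card_congr
    { toFun := fun d => ⟨fun j => !d.1 j, d.2.1.not, by simp [d.2.2]⟩
      invFun := fun d => ⟨fun j => !d.1 j, d.2.1.not, by simp [d.2.2]⟩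
      left_inv := fun d => by simp
      right_inv := fun d => by simp }

lemma locoN_eq_card_add_card {m x : ℕ} (i : Fin m) :
    locoN m x = Nat.card {d : Fin m → Bool // noForbidden m x d ∧ d i = false}
      + Nat.card {d : Fin m → Bool // noForbidden m x d ∧ d i = true} := by
  classical
  simp only [locoN, Nat.card_eq_fintype_card]
  rw [← Fintype.card_subtype_or_disjoint]
  · exact Fintype.card_congr (Equiv.subtypeEquivRight fun d => by cases d i <;> simp)
  · exact disjoint_iff_inf_le.mpr fun d ⟨⟨_, hf⟩, ⟨_, ht⟩⟩ => by simp_all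

lemma two_mul_card_noForbidden_apply_false {m x : ℕ} (i : Fin m) :
    2 * Nat.card {d : Fin m → Bool // noForbidden m x d ∧ d i = false} = locoN m x := by
  rw [locoN_eq_card_add_card i, card_noForbidden_apply_true_eq, two_mul]

lemma card_group1_eq (n x : ℕ) :
    Nat.card {c : Fin (n + 2) → Bool // noForbidden (n + 2) x c ∧
        c (Fin.last (n + 1)) = false ∧ c (Fin.last n).castSucc = false}
      = Nat.card {d : Fin (n + 1) → Bool // noForbidden (n + 1) x d ∧ d (Fin.last n) = false} :=
  Nat.card_congr
    { toFun := fun c => ⟨Fin.init c.1, c.2.1.init, c.2.2.2⟩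
      invFun := fun d =>
        ⟨Fin.snoc d.1 false, d.2.1.snoc_false d.2.2, by simp, by simpa using d.2.2⟩
      left_inv := fun c => Subtype.ext <| by
        simpa only [c.2.2.1] using Fin.snoc_init_self (α := fun _ => Bool) c.1
      right_inv := fun d => Subtype.ext <| Fin.init_snoc (α := fun _ => Bool) false d.1 }

lemma locoN_one (x : ℕ) : locoN 1 x = 2 := by
  have hall : ∀ c : Fin 1 → Bool, noForbidden 1 x c := fun _ _ _ _ _ _ => by omega
  simp [locoN, Nat.card_congr (Equiv.subtypeUnivEquiv hall)]

lemma Nex_natCast_succ (n x : ℕ) : Nex ((n + 1 : ℕ) : ℤ) x = locoN (n + 1) x := by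
  rcases n.eq_zero_or_pos with rfl | hn
  · simp [Nex, locoN_one]
  · rw [Nex, if_neg (by omega), Int.toNat_natCast]

/-- For all `m ≥ 2` and `x ≥ 1`, twice the number of codewords of `C(m, x)`
whose two leftmost bits `c_{m-1} c_{m-2}` equal `00` (Group 1) is `N(m - 1, x)`. -/
theorem loco_group1_card (m x : ℕ) (hm : 2 ≤ m) :
    2 * (Nat.card {c : Fin m → Bool // noForbidden m x c ∧
          c ⟨m - 1, by omega⟩ = false ∧ c ⟨m - 2, by omega⟩ = false} : ℤ)
      = Nex ((m : ℤ) - 1) x := by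
  obtain ⟨n, rfl⟩ := Nat.exists_eq_add_of_le' hm
  rw [show ((n + 2 : ℕ) : ℤ) - 1 = ((n + 1 : ℕ) : ℤ) by push_cast; ring, Nex_natCast_succ,
    ← two_mul_card_noForbidden_apply_false (Fin.last n)]
  -- `⟨n + 2 - 1, _⟩`, `⟨n + 2 - 2, _⟩` are defeq to `Fin.last (n + 1)`, `(Fin.last n).castSucc`
  exact_mod_cast congrArg (2 * ·) (card_group1_eq n x)
end

section
/- For all integers m ≥ 1 and x ≥ 1 and every codeword c ∈ C(m,x), the leftmost bit c_{m−1} equals 0 if and only if 2·g(c) < N(m,x); that is, the codewords starting with 0 from the left are exactly the first N(m,x)/2 codewords in lexicographic order. -/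
/-!
Complementing every bit preserves the LOCO constraints and swaps the codewords with leading
bit `0` and those with leading bit `1`, so exactly half of the `N(m, x)` codewords start with
`0`, and they are the lexicographically smallest ones. A codeword starting with `0` is preceded
only by codewords starting with `0` (not including itself), hence `g(c) < N / 2`; one starting
with `1` is preceded by all of them, hence `g(c) ≥ N / 2`.
-/

theorem noForbidden_compl_iff {m x : ℕ} {c : Fin m → Bool} :
    noForbidden m x cᶜ ↔ noForbidden m x c := by
  simp only [noForbidden, Pi.compl_apply, Bool.compl_eq_bnot, Bool.not_inj_iff]

theorem two_mul_ncard_inter_setOf_eq_false {ι : Type*} [Finite ι] (S : Set (ι → Bool))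
    (hS : ∀ c ∈ S, cᶜ ∈ S) (i : ι) :
    2 * (S ∩ {c | c i = false}).ncard = S.ncard := by
  have hswap : compl '' (S ∩ {c | c i = false}) = S \ {c | c i = false} := by
    ext c
    refine ⟨?_, fun ⟨hc, hci⟩ => ⟨cᶜ, ⟨hS c hc, by simpa using hci⟩, compl_compl c⟩⟩
    rintro ⟨d, ⟨hd, hdi⟩, rfl⟩
    exact ⟨hS d hd, by simpa using hdi⟩
  rw [← Set.ncard_inter_add_ncard_sdiff_eq_ncard S {c | c i = false}, ← hswap,
    Set.ncard_image_of_injective _ compl_injective, two_mul]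

theorem locoN_succ_eq_two_mul (n x : ℕ) :
    locoN (n + 1) x =
      2 * ({d | noForbidden (n + 1) x d} ∩ {d | d (Fin.last n) = false}).ncard :=
  (two_mul_ncard_inter_setOf_eq_false {d | noForbidden (n + 1) x d}
    (fun _ hd => noForbidden_compl_iff.2 hd) (Fin.last n)).symm

theorem lexLt_irrefl {m : ℕ} (c : Fin m → Bool) : ¬ lexLt m c c := by
  rintro ⟨i, hfalse, htrue, -⟩
  simp [hfalse] at htrue

section lexLt

variable {n : ℕ} {d c : Fin (n + 1) → Bool}

theorem lexLt_of_last (hd : d (Fin.last n) = false) (hc : c (Fin.last n) = true) :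
    lexLt (n + 1) d c :=
  ⟨Fin.last n, hd, hc, fun j hj => absurd hj (not_lt.2 (Fin.le_last j))⟩

theorem lexLt.last_eq_false (h : lexLt (n + 1) d c) (hc : c (Fin.last n) = false) :
    d (Fin.last n) = false := by
  obtain ⟨i, hdi, hci, hagree⟩ := h
  rcases (Fin.le_last i).lt_or_eq with hi | rfl
  · rwa [hagree _ hi]
  · simp [hc] at hci

end lexLt

/-- For all `m ≥ 1`, `x ≥ 1` and every codeword `c ∈ C(m, x)`, the leftmost
bit `c_{m-1}` equals `0` iff `2 g(c) < N(m, x)`; the codewords starting with `0` from the left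
are exactly the first `N(m, x)/2` codewords in lexicographic order. -/
theorem loco_lmb_zero_iff_first_half (m x : ℕ) (hm : 1 ≤ m)
    (c : Fin m → Bool) (hc : noForbidden m x c) :
    c ⟨m - 1, by omega⟩ = false ↔ 2 * locoIdx m x c < locoN m x := by
  obtain ⟨n, rfl⟩ : ∃ n, m = n + 1 := ⟨m - 1, by omega⟩
  change c (Fin.last n) = false ↔ _
  rw [locoN_succ_eq_two_mul]
  set A := {d | noForbidden (n + 1) x d} ∩ {d | d (Fin.last n) = false}
  set P := {d | noForbidden (n + 1) x d ∧ lexLt (n + 1) d c}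
  have hIdx : locoIdx (n + 1) x c = P.ncard := rfl
  rw [hIdx]
  constructor
  · intro hlast
    have hPA : P ⊂ A :=
      ⟨fun d ⟨hd, hdc⟩ => ⟨hd, hdc.last_eq_false hlast⟩,
        fun hAP => lexLt_irrefl c (hAP ⟨hc, hlast⟩).2⟩
    have := Set.ncard_lt_ncard hPA
    omega
  · intro hhalf
    by_contra hlast
    have hAP : A ⊆ P := fun d ⟨hd, hdlast⟩ => ⟨hd, lexLt_of_last hdlast (by simpa using hlast)⟩
    have := Set.ncard_le_ncard hAP
    omega
end
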